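/- arXiv:2407.07508 — 4 statements merged into one kernel-verified Lean document; each statement's English description precedes it below -/
import Mathlib

section
/- Let (Φ_n)_{n≥0} be a sequence of monic complex polynomials with deg Φ_n = n and Φ_0 = 1. Then the following are equivalent: (i) there exists a complex sequence (α_n)_{n≥0} with |α_n| < 1 for all n such that Φ_{n+1}(z) = z·Φ_n(z) - conj(α_n)·Φ_n^*(z) for all n ≥ 0 (Szegő's recurrence); (ii) there exists a unique linear functional L on the complex vector space V of Laurent polynomials such that L(1) = 1 and L(Φ_m(z)·Φ̄_n(1/z)) = κ_n·δ_{m,n} for all m, n ≥ 0, where each κ_n is a real number with κ_n > 0. -/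
open Polynomial LaurentPolynomial Finset

noncomputable section

/-- Extension of the Verblunsky coefficients to integer indices, with the
convention `α₋₁ = -1` (and junk value `-1` for all negative indices). -/
def az (α : ℕ → ℂ) (k : ℤ) : ℂ := if 0 ≤ k then α k.toNat else -1

/-- The monic OPUC `Φ_n` defined by Szegő's recurrence
`Φ_{n+1}(z) = z·Φ_n(z) - conj(α_n)·Φ_n^*(z)`, where `Φ_n^*` is the reverse
polynomial `reflect n (map conj Φ_n)`. -/
def szego (α : ℕ → ℂ) : ℕ → Polynomial ℂ
  | 0 => 1
  | n + 1 =>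
      Polynomial.X * szego α n -
        Polynomial.C ((starRingEnd ℂ) (α n)) *
          Polynomial.reflect n ((szego α n).map (starRingEnd ℂ))

/-- `f̄(1/z)` as a Laurent polynomial, for a polynomial `f`. -/
def polyBarInv (f : Polynomial ℂ) : LaurentPolynomial ℂ :=
  f.sum fun k c => LaurentPolynomial.C ((starRingEnd ℂ) c) * LaurentPolynomial.T (-(k : ℤ))

/-- `f̄(1/z)` as a Laurent polynomial, for a Laurent polynomial `f`. -/
def laurentBarInv (f : LaurentPolynomial ℂ) : LaurentPolynomial ℂ :=
  Finsupp.sum f.coeff fun k c => LaurentPolynomial.C ((starRingEnd ℂ) c) * LaurentPolynomial.T (-k)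

/-- The generalized moment `μ_{n,r,s} = ⟨Φ_s(z), z^n·Φ_r(z)⟩ / ⟨Φ_s(z), Φ_s(z)⟩`,
where `⟨f,g⟩ = L(f(z)·ḡ(1/z))` and `⟨Φ_s, Φ_s⟩ = ∏_{j<s} (1 - |α_j|²)`. -/
def genMom (L : LaurentPolynomial ℂ →ₗ[ℂ] ℂ) (α : ℕ → ℂ) (n : ℤ) (r s : ℕ) : ℂ :=
  L (Polynomial.toLaurent (szego α s) *
      laurentBarInv (LaurentPolynomial.T n * Polynomial.toLaurent (szego α r))) /
    ∏ j ∈ Finset.range s, ((1 - Complex.normSq (α j) : ℝ) : ℂ)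

/-- `IsLatticePath S p l q` : the list of steps `l`, starting at `p`, forms a lattice
path from `p` to `q` lying weakly above the x-axis, each step `st` taken from a
position `x` satisfying the (possibly position-dependent) step condition `S x st`. -/
def IsLatticePath (S : ℤ × ℤ → ℤ × ℤ → Prop) : ℤ × ℤ → List (ℤ × ℤ) → ℤ × ℤ → Prop
  | p, [], q => p = q ∧ 0 ≤ p.2
  | p, st :: rest, q => 0 ≤ p.2 ∧ S p st ∧ IsLatticePath S (p + st) rest q

/-- The weight of a path: the product of the weights of its steps, where the weight
of a step may depend on its starting position. -/
def pathWeight (w : ℤ × ℤ → ℤ × ℤ → ℂ) : ℤ × ℤ → List (ℤ × ℤ) → ℂ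
  | _, [] => 1
  | p, st :: rest => w p st * pathWeight w (p + st) rest

/-- Łukasiewicz steps: `(1, k)` with `k ≤ 1`. -/
def lukaStep (_p st : ℤ × ℤ) : Prop := st.1 = 1 ∧ st.2 ≤ 1

/-- Łukasiewicz step weights: an up-step has weight `1`, and a step
`(a,b) → (a+1,b-k)` (`0 ≤ k ≤ b`) has weight
`-α_b·conj(α_{b-k-1})·∏_{j=b-k}^{b-1} (1-|α_j|²)`. -/
def wtLstep (α : ℕ → ℂ) (p st : ℤ × ℤ) : ℂ :=
  if st.2 = 1 then 1
  else
    -(az α p.2) * (starRingEnd ℂ) (az α (p.2 + st.2 - 1)) *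
      ∏ j ∈ Finset.Ico (p.2 + st.2) p.2, ((1 - Complex.normSq (az α j) : ℝ) : ℂ)

/-- Gentle Motzkin steps: `(1,1)` (only at even `a+b`), `(1,0)`, `(1,-1)` (only at odd `a+b`). -/
def gentleStep (p st : ℤ × ℤ) : Prop :=
  (st = (1, 1) ∧ Even (p.1 + p.2)) ∨ st = (1, 0) ∨ (st = (1, -1) ∧ Odd (p.1 + p.2))

/-- Gentle Motzkin step weights. -/
def wtMstep (α : ℕ → ℂ) (p st : ℤ × ℤ) : ℂ :=
  if st = (1, 1) then 1
  else if st = (1, -1) then ((1 - Complex.normSq (az α (p.2 - 1)) : ℝ) : ℂ)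
  else if Even (p.1 + p.2) then az α p.2
  else -(starRingEnd ℂ) (az α (p.2 - 1))

/-- Schröder steps: `(1,1)`, `(1,0)`, `(0,-1)`. -/
def schStep (_p st : ℤ × ℤ) : Prop := st = (1, 1) ∨ st = (1, 0) ∨ st = (0, -1)

/-- Schröder step weights. -/
def wtSstep (α : ℕ → ℂ) (p st : ℤ × ℤ) : ℂ :=
  if st = (1, 1) then 1
  else if st = (1, 0) then -((starRingEnd ℂ) (az α (p.2 - 1)) / (starRingEnd ℂ) (az α p.2))
  else
    ((starRingEnd ℂ) (az α (p.2 - 2)) / (starRingEnd ℂ) (az α (p.2 - 1))) *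
      ((1 - Complex.normSq (az α (p.2 - 1)) : ℝ) : ℂ)


/-!
Write `⟪p, q⟫ = L(p(z) q̄(1/z))`. As `Φ_n` is monic of degree `n`, the `Φ_k` with `k < n` span the
polynomials of degree `< n`, so a (semi)linear condition holds on all of them as soon as it holds
on the `Φ_k`; this turns every orthogonality statement into a triangular one.

(i) ⇒ (ii): the moments `c_n = L(z^n)` are forced recursively by `L(Φ_{n+1}) = 0`, and we put
`c_{-n} = conj c_n`. Any `L` as in (ii) satisfies `L(Φ_n) = L(Φ̄_n(1/z)) = δ_{n,0}`, which pins it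
down. Plugging Szegő's recurrence into `L(Φ_{n+1}(z) z^{-k})` shows by induction that it vanishes
for `0 ≤ k < n + 1` and equals `κ_{n+1} = (1 - |α_n|²) κ_n` for `k = n + 1`; the pairings
`⟪Φ_m, Φ_n⟫` with `m < n` follow by the symmetry `L(f̄(1/z)) = conj L(f)`.

(ii) ⇒ (i): `Φ_{n+1} - zΦ_n` and `Φ_n^*` have degree `≤ n` and are orthogonal to `z, …, z^n`, while
`⟪Φ_n^*, 1⟫ = κ_n ≠ 0`. Removing the multiple of `Φ_n^*` that makes the difference orthogonal to
`1` as well leaves a polynomial of degree `≤ n` orthogonal to all of `1, …, z^n`, hence zero.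
Expanding `⟪Φ_{n+1}, Φ_{n+1}⟫` in the resulting recurrence gives `κ_{n+1} = (1 - |α_n|²) κ_n`, so
positivity of the `κ_n` forces `|α_n| < 1`.
-/

namespace Polynomial

variable {R S M : Type*} [Ring R] {Φ : ℕ → R[X]}

theorem IsMonicOfDegree.coeff_self {p : R[X]} {n : ℕ} (hp : IsMonicOfDegree p n) :
    p.coeff n = 1 :=
  hp.natDegree_eq ▸ hp.monic.coeff_natDegree

theorem degree_sub_coeff_smul_lt (hΦ : ∀ n, IsMonicOfDegree (Φ n) n) {p : R[X]} {n : ℕ}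
    (hp : p.natDegree ≤ n) : (p - p.coeff n • Φ n).degree < n := by
  rw [degree_lt_iff_coeff_zero]
  intro m hm
  rw [coeff_sub, coeff_smul, smul_eq_mul]
  obtain rfl | hlt := hm.eq_or_lt
  · rw [(hΦ n).coeff_self, mul_one, sub_self]
  · rw [coeff_eq_zero_of_natDegree_lt (hp.trans_lt hlt),
      coeff_eq_zero_of_natDegree_lt ((hΦ n).natDegree_eq.trans_lt hlt), mul_zero, sub_zero]

theorem degreeLT_le_span_image (hΦ : ∀ n, IsMonicOfDegree (Φ n) n) (n : ℕ) :
    degreeLT R n ≤ Submodule.span R (Φ '' Set.Iio n) := by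
  induction n with
  | zero =>
    intro p hp
    rw [mem_degreeLT, Nat.cast_zero, Nat.WithBot.lt_zero_iff, degree_eq_bot] at hp
    exact hp ▸ Submodule.zero_mem _
  | succ n ih =>
    intro p hp
    have hp' : p.natDegree ≤ n :=
      natDegree_le_of_degree_le (Order.le_of_lt_succ (by exact_mod_cast mem_degreeLT.mp hp))
    have hrest := ih (mem_degreeLT.mpr (degree_sub_coeff_smul_lt hΦ hp'))
    have hΦn : Φ n ∈ Submodule.span R (Φ '' Set.Iio (n + 1)) :=
      Submodule.subset_span ⟨n, Set.mem_Iio.mpr n.lt_succ_self, rfl⟩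
    have hmono : Submodule.span R (Φ '' Set.Iio n) ≤ Submodule.span R (Φ '' Set.Iio (n + 1)) :=
      Submodule.span_mono (Set.image_mono (Set.Iio_subset_Iio n.le_succ))
    simpa using Submodule.add_mem _ (hmono hrest) (Submodule.smul_mem _ (p.coeff n) hΦn)

variable [Semiring S] [AddCommGroup M] [Module S M] {σ : R →+* S}

theorem linearMap_apply_eq_zero_of_degree_lt (hΦ : ∀ n, IsMonicOfDegree (Φ n) n) (f : R[X] →ₛₗ[σ] M)
    {n : ℕ} (hf : ∀ k < n, f (Φ k) = 0) {p : R[X]} (hp : p.degree < n) : f p = 0 := by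
  have hker : Submodule.span R (Φ '' Set.Iio n) ≤ LinearMap.ker f :=
    Submodule.span_le.mpr (by rintro _ ⟨k, hk, rfl⟩; exact hf k hk)
  exact hker (degreeLT_le_span_image hΦ n (mem_degreeLT.mpr hp))

theorem linearMap_apply_eq_coeff_smul (hΦ : ∀ n, IsMonicOfDegree (Φ n) n) (f : R[X] →ₛₗ[σ] M)
    {n : ℕ} (hf : ∀ k < n, f (Φ k) = 0) {p : R[X]} (hp : p.natDegree ≤ n) :
    f p = σ (p.coeff n) • f (Φ n) := by
  have := linearMap_apply_eq_zero_of_degree_lt hΦ f hf (degree_sub_coeff_smul_lt hΦ hp)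
  rwa [map_sub, map_smulₛₗ, sub_eq_zero] at this

theorem linearMap_eq_zero_of_forall (hΦ : ∀ n, IsMonicOfDegree (Φ n) n) (f : R[X] →ₛₗ[σ] M)
    (hf : ∀ n, f (Φ n) = 0) : f = 0 :=
  LinearMap.ext fun p => linearMap_apply_eq_zero_of_degree_lt hΦ f (n := p.natDegree + 1)
    (fun k _ => hf k) (degree_le_natDegree.trans_lt (by exact_mod_cast p.natDegree.lt_succ_self))

end Polynomial

namespace LaurentPolynomial

theorem linearMap_ext {R M : Type*} [CommSemiring R] [AddCommMonoid M] [Module R M]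
    {f g : LaurentPolynomial R →ₗ[R] M} (h : ∀ k, f (T k) = g (T k)) : f = g := by
  refine LinearMap.ext fun p => ?_
  induction p using LaurentPolynomial.induction_on' with
  | add p q hp hq => rw [map_add, map_add, hp, hq]
  | C_mul_T k a => rw [← smul_eq_C_mul, map_smul, map_smul, h]

def barInv : LaurentPolynomial ℂ →+* LaurentPolynomial ℂ :=
  (invert : LaurentPolynomial ℂ ≃ₐ[ℂ] LaurentPolynomial ℂ).toRingHom.comp
    (AddMonoidAlgebra.mapRingHom ℤ (starRingEnd ℂ))

theorem barInv_T (n : ℤ) : barInv (T n) = T (-n) := by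
  rw [barInv, RingHom.comp_apply, T, AddMonoidAlgebra.mapRingHom_single, map_one, ← T]
  exact invert_T n

theorem barInv_C (a : ℂ) : barInv (C a) = C (starRingEnd ℂ a) := by
  rw [barInv, RingHom.comp_apply, ← single_eq_C, AddMonoidAlgebra.mapRingHom_single, single_eq_C]
  exact invert_C _

theorem barInv_smul (a : ℂ) (f : LaurentPolynomial ℂ) :
    barInv (a • f) = starRingEnd ℂ a • barInv f := by
  rw [smul_eq_C_mul, map_mul, barInv_C, smul_eq_C_mul]

theorem barInv_barInv (f : LaurentPolynomial ℂ) : barInv (barInv f) = f := by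
  ext m
  simp [barInv]

end LaurentPolynomial

theorem Polynomial.toLaurent_smul {R : Type*} [CommSemiring R] (c : R) (p : R[X]) :
    toLaurent (c • p) = c • toLaurent p := by
  rw [← toLaurentAlg_apply, map_smul, toLaurentAlg_apply]

theorem Polynomial.toLaurent_map {R S : Type*} [Semiring R] [Semiring S] (f : R →+* S)
    (p : R[X]) : toLaurent (p.map f) = AddMonoidAlgebra.mapRingHom ℤ f (toLaurent p) := by
  induction p using Polynomial.induction_on' with
  | add p q hp hq => simp only [Polynomial.map_add, map_add, hp, hq]
  | monomial n a =>
    rw [Polynomial.map_monomial, ← C_mul_X_pow_eq_monomial, ← C_mul_X_pow_eq_monomial,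
      toLaurent_C_mul_X_pow, toLaurent_C_mul_X_pow, ← single_eq_C_mul_T, ← single_eq_C_mul_T,
      AddMonoidAlgebra.mapRingHom_single]

theorem Polynomial.toLaurent_reflect_map_conj {p : ℂ[X]} {n : ℕ} (hp : p.natDegree = n) :
    toLaurent (reflect n (p.map (starRingEnd ℂ))) = T n * barInv (toLaurent p) := by
  have hmap : (p.map (starRingEnd ℂ)).natDegree = n := by rw [natDegree_map, hp]
  rw [← hmap, ← reverse, toLaurent_reverse, toLaurent_map, hmap, mul_comm]
  rfl

theorem Polynomial.natDegree_reflect_map_conj_le {p : ℂ[X]} {n : ℕ} (hp : p.natDegree = n) :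
    (reflect n (p.map (starRingEnd ℂ))).natDegree ≤ n :=
  natDegree_reflect_le.trans (by rw [natDegree_map, hp, max_self])

theorem polyBarInv_eq (p : ℂ[X]) : polyBarInv p = barInv (toLaurent p) := by
  induction p using Polynomial.induction_on' with
  | add p q hp hq =>
    rw [polyBarInv, Polynomial.sum_add_index _ _ _ (by simp) (by simp [add_mul]), map_add, map_add,
      ← polyBarInv, ← polyBarInv, hp, hq]
  | monomial n a =>
    rw [polyBarInv, Polynomial.sum_monomial_index _ _ (by simp), ← C_mul_X_pow_eq_monomial,
      toLaurent_C_mul_X_pow, map_mul, barInv_C, barInv_T]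

namespace OPUC

def pairing (L : LaurentPolynomial ℂ →ₗ[ℂ] ℂ) : ℂ[X] →ₗ[ℂ] ℂ[X] →ₗ⋆[ℂ] ℂ :=
  LinearMap.mk₂'ₛₗ _ _ (fun p q => L (toLaurent p * barInv (toLaurent q)))
    (fun p p' q => by rw [map_add, add_mul, map_add])
    (fun c p q => by rw [toLaurent_smul, smul_mul_assoc, map_smul]; rfl)
    (fun p q q' => by rw [map_add, map_add, mul_add, map_add])
    (fun c p q => by rw [toLaurent_smul, barInv_smul, mul_smul_comm, map_smul])

section Pairing

variable (L : LaurentPolynomial ℂ →ₗ[ℂ] ℂ)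

@[simp]
theorem pairing_apply (p q : ℂ[X]) : pairing L p q = L (toLaurent p * barInv (toLaurent q)) :=
  rfl

theorem pairing_eq_polyBarInv (p q : ℂ[X]) :
    pairing L p q = L (toLaurent p * polyBarInv q) := by
  rw [polyBarInv_eq, pairing_apply]

theorem pairing_X_mul_X_mul (p q : ℂ[X]) : pairing L (X * p) (X * q) = pairing L p q := by
  simp only [pairing_apply, map_mul, toLaurent_X, barInv_T]
  rw [mul_mul_mul_comm, ← T_add, add_neg_cancel, T_zero, one_mul]

theorem pairing_reflect_X_pow {p : ℂ[X]} {n k : ℕ} (hp : p.natDegree = n) (hk : k ≤ n) :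
    pairing L (reflect n (p.map (starRingEnd ℂ))) (X ^ k) = pairing L (X ^ (n - k)) p := by
  simp only [pairing_apply, toLaurent_reflect_map_conj hp, toLaurent_X_pow, barInv_T]
  rw [mul_right_comm, ← T_add, Nat.cast_sub hk, sub_eq_add_neg]

theorem pairing_reflect_reflect {p : ℂ[X]} {n : ℕ} (hp : p.natDegree = n) :
    pairing L (reflect n (p.map (starRingEnd ℂ))) (reflect n (p.map (starRingEnd ℂ))) =
      pairing L p p := by
  simp only [pairing_apply, toLaurent_reflect_map_conj hp, map_mul, barInv_T, barInv_barInv]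
  rw [mul_mul_mul_comm, ← T_add, add_neg_cancel, T_zero, one_mul, mul_comm]

theorem pairing_swap (hL : ∀ f, L (barInv f) = starRingEnd ℂ (L f)) (p q : ℂ[X]) :
    pairing L q p = starRingEnd ℂ (pairing L p q) := by
  rw [pairing_apply, pairing_apply, ← hL, map_mul barInv, barInv_barInv, mul_comm]

end Pairing

section Orthogonal

variable {Φ : ℕ → ℂ[X]} {L : LaurentPolynomial ℂ →ₗ[ℂ] ℂ} {κ : ℕ → ℝ}
  (hΦ : ∀ n, IsMonicOfDegree (Φ n) n)
  (horth : ∀ m n, pairing L (Φ m) (Φ n) = if m = n then (κ n : ℂ) else 0)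
include hΦ horth

theorem pairing_eq_coeff_mul {p : ℂ[X]} {n : ℕ} (hp : p.natDegree ≤ n) :
    pairing L p (Φ n) = p.coeff n * κ n := by
  simpa [horth] using linearMap_apply_eq_coeff_smul hΦ ((pairing L).flip (Φ n))
    (fun k hk => by rw [LinearMap.flip_apply, horth, if_neg hk.ne]) hp

theorem pairing_eq_zero_of_natDegree_lt {p : ℂ[X]} {n : ℕ} (hp : p.natDegree < n) :
    pairing L (Φ n) p = 0 :=
  linearMap_apply_eq_zero_of_degree_lt hΦ (pairing L (Φ n))
    (fun k hk => by rw [horth, if_neg hk.ne'])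
    (degree_le_natDegree.trans_lt (by exact_mod_cast hp))

theorem eq_zero_of_pairing_X_pow_eq_zero (hκ : ∀ n, 0 < κ n) {ψ : ℂ[X]} {n : ℕ}
    (hψ : ψ.natDegree ≤ n) (h : ∀ k ≤ n, pairing L ψ (X ^ k) = 0) : ψ = 0 := by
  by_contra hne
  have hdeg : (Φ ψ.natDegree).degree < ↑(n + 1) := by
    rw [degree_eq_natDegree (hΦ _).ne_zero, (hΦ _).natDegree_eq]
    exact_mod_cast Nat.lt_succ_of_le hψ
  have hzero := linearMap_apply_eq_zero_of_degree_lt (isMonicOfDegree_X_pow ℂ) (pairing L ψ)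
    (fun k hk => h k (Nat.le_of_lt_succ hk)) hdeg
  rw [pairing_eq_coeff_mul hΦ horth le_rfl] at hzero
  exact mul_ne_zero (leadingCoeff_ne_zero.mpr hne) (by exact_mod_cast (hκ _).ne') hzero

theorem szego_recurrence_of_orthogonal (hκ : ∀ n, 0 < κ n) (n : ℕ) :
    Φ (n + 1) = X * Φ n + Polynomial.C (pairing L (Φ (n + 1) - X * Φ n) 1 / κ n) *
      reflect n ((Φ n).map (starRingEnd ℂ)) := by
  set c := pairing L (Φ (n + 1) - X * Φ n) 1 / κ n with hc
  have hreflect := natDegree_reflect_map_conj_le (hΦ n).natDegree_eq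
  have hdiff : (Φ (n + 1) - X * Φ n).natDegree < n + 1 :=
    (hΦ (n + 1)).natDegree_sub_lt n.succ_ne_zero
      (by simpa [mul_comm] using (hΦ n).mul (isMonicOfDegree_X ℂ))
  rw [← sub_eq_zero, ← sub_sub]
  refine eq_zero_of_pairing_X_pow_eq_zero hΦ horth hκ
    ((natDegree_sub_le _ _).trans
      (max_le (Nat.le_of_lt_succ hdiff) ((natDegree_C_mul_le _ _).trans hreflect)))
    fun k hk => ?_
  rw [map_sub, LinearMap.sub_apply, ← Polynomial.smul_eq_C_mul, map_smul, LinearMap.smul_apply,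
    smul_eq_mul, pairing_reflect_X_pow L (hΦ n).natDegree_eq hk,
    pairing_eq_coeff_mul hΦ horth ((natDegree_X_pow_le _).trans (n.sub_le k)), coeff_X_pow]
  rcases k with _ | k
  · rw [pow_zero, Nat.sub_zero, if_pos rfl, one_mul, hc,
      div_mul_cancel₀ _ (by exact_mod_cast (hκ n).ne'), sub_self]
  · rw [map_sub, LinearMap.sub_apply,
      pairing_eq_zero_of_natDegree_lt hΦ horth (by rw [natDegree_X_pow]; omega), pow_succ',
      pairing_X_mul_X_mul,
      pairing_eq_zero_of_natDegree_lt hΦ horth (by rw [natDegree_X_pow]; omega), if_neg (by omega)]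
    simp

theorem kappa_succ_of_orthogonal {n : ℕ} {c : ℂ}
    (hrec : Φ (n + 1) = X * Φ n + Polynomial.C c * reflect n ((Φ n).map (starRingEnd ℂ))) :
    κ (n + 1) = (1 - Complex.normSq c) * κ n := by
  set Φs := reflect n ((Φ n).map (starRingEnd ℂ))
  have hreflect : Φs.natDegree ≤ n := natDegree_reflect_map_conj_le (hΦ n).natDegree_eq
  have hnorm : pairing L (Φ (n + 1)) (Φ (n + 1)) = κ (n + 1) := by rw [horth, if_pos rfl]
  have horth_left : pairing L (Φ (n + 1)) Φs = 0 :=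
    pairing_eq_zero_of_natDegree_lt hΦ horth (hreflect.trans_lt n.lt_succ_self)
  have horth_right : pairing L Φs (Φ (n + 1)) = 0 := by
    rw [pairing_eq_coeff_mul hΦ horth (hreflect.trans n.le_succ),
      coeff_eq_zero_of_natDegree_lt (hreflect.trans_lt n.lt_succ_self), zero_mul]
  have hΦs : pairing L Φs Φs = κ n := by
    rw [pairing_reflect_reflect L (hΦ n).natDegree_eq, horth, if_pos rfl]
  have hXΦ : pairing L (X * Φ n) (X * Φ n) = κ n := by
    rw [pairing_X_mul_X_mul, horth, if_pos rfl]
  rw [hrec] at hnorm horth_left horth_right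
  simp only [← Polynomial.smul_eq_C_mul, map_add, map_smul, map_smulₛₗ, LinearMap.add_apply,
    LinearMap.smul_apply, smul_eq_mul, hΦs, hXΦ] at hnorm horth_left horth_right
  have h : (κ (n + 1) : ℂ) = (1 - Complex.normSq c) * κ n := by
    rw [Complex.normSq_eq_conj_mul_self]
    linear_combination -hnorm + starRingEnd ℂ c * horth_left + c * horth_right
  exact_mod_cast h

theorem exists_szego_step (hκ : ∀ n, 0 < κ n) (n : ℕ) :
    ∃ a : ℂ, ‖a‖ < 1 ∧ Φ (n + 1) = X * Φ n -
      Polynomial.C (starRingEnd ℂ a) * reflect n ((Φ n).map (starRingEnd ℂ)) := by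
  set c := pairing L (Φ (n + 1) - X * Φ n) 1 / κ n
  have hrec := szego_recurrence_of_orthogonal hΦ horth hκ n
  have hκ_succ := hκ (n + 1)
  rw [kappa_succ_of_orthogonal hΦ horth hrec] at hκ_succ
  have hc : Complex.normSq c < 1 := sub_pos.mp (pos_of_mul_pos_left hκ_succ (hκ n).le)
  refine ⟨-starRingEnd ℂ c, ?_, ?_⟩
  · rwa [norm_neg, Complex.norm_conj, ← sq_lt_one_iff₀ (norm_nonneg c),
      ← Complex.normSq_eq_norm_sq]
  · rw [map_neg, Complex.conj_conj, map_neg, neg_mul, sub_neg_eq_add]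
    exact hrec

end Orthogonal

section Uniqueness

variable {Φ : ℕ → ℂ[X]} (hΦ : ∀ n, IsMonicOfDegree (Φ n) n)
include hΦ

theorem eq_of_pairing_one_eq {L₁ L₂ : LaurentPolynomial ℂ →ₗ[ℂ] ℂ}
    (h₁ : ∀ n, pairing L₁ (Φ n) 1 = pairing L₂ (Φ n) 1)
    (h₂ : ∀ n, pairing L₁ 1 (Φ n) = pairing L₂ 1 (Φ n)) : L₁ = L₂ := by
  have hnonneg : (pairing (L₁ - L₂)).flip 1 = 0 :=
    linearMap_eq_zero_of_forall hΦ _ fun n => by simpa [sub_eq_zero] using h₁ n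
  have hneg : pairing (L₁ - L₂) 1 = 0 :=
    linearMap_eq_zero_of_forall hΦ _ fun n => by simpa [sub_eq_zero] using h₂ n
  refine LaurentPolynomial.linearMap_ext fun k => ?_
  obtain ⟨n, rfl | rfl⟩ := k.eq_nat_or_neg
  · simpa [sub_eq_zero] using LinearMap.congr_fun hnonneg (X ^ n)
  · simpa [sub_eq_zero, barInv_T] using LinearMap.congr_fun hneg (X ^ n)

theorem eq_of_pairing_eq_zero_of_ne {L₁ L₂ : LaurentPolynomial ℂ →ₗ[ℂ] ℂ}
    (hL₁ : L₁ 1 = 1) (hL₂ : L₂ 1 = 1)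
    (h₁ : ∀ m n, m ≠ n → pairing L₁ (Φ m) (Φ n) = 0)
    (h₂ : ∀ m n, m ≠ n → pairing L₂ (Φ m) (Φ n) = 0) : L₁ = L₂ := by
  have hΦ0 : Φ 0 = 1 := isMonicOfDegree_zero_iff.mp (hΦ 0)
  have hone (L : LaurentPolynomial ℂ →ₗ[ℂ] ℂ) (hL : L 1 = 1)
      (h : ∀ m n, m ≠ n → pairing L (Φ m) (Φ n) = 0) (n : ℕ) :
      pairing L (Φ n) 1 = (if n = 0 then 1 else 0) ∧
        pairing L 1 (Φ n) = if n = 0 then 1 else 0 := by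
    cases n with
    | zero => simp [hΦ0, hL]
    | succ n =>
      simpa [hΦ0] using And.intro (h (n + 1) 0 n.succ_ne_zero) (h 0 (n + 1) n.succ_ne_zero.symm)
  exact eq_of_pairing_one_eq hΦ
    (fun n => (hone L₁ hL₁ h₁ n).1.trans (hone L₂ hL₂ h₂ n).1.symm)
    (fun n => (hone L₁ hL₁ h₁ n).2.trans (hone L₂ hL₂ h₂ n).2.symm)

end Uniqueness

def moment (Φ : ℕ → ℂ[X]) : ℕ → ℂ
  | 0 => 1
  | n + 1 => -∑ k : Fin (n + 1), (Φ (n + 1)).coeff k * moment Φ k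

theorem moment_succ (Φ : ℕ → ℂ[X]) (n : ℕ) :
    moment Φ (n + 1) = -∑ k ∈ range (n + 1), (Φ (n + 1)).coeff k * moment Φ k := by
  rw [moment, Fin.sum_univ_eq_sum_range (fun k => (Φ (n + 1)).coeff k * moment Φ k)]

def momentFunctional (Φ : ℕ → ℂ[X]) : LaurentPolynomial ℂ →ₗ[ℂ] ℂ :=
  Finsupp.linearCombination ℂ
      (fun k : ℤ => if 0 ≤ k then moment Φ k.toNat else starRingEnd ℂ (moment Φ (-k).toNat)) ∘ₗ
    (AddMonoidAlgebra.coeffLinearEquiv ℂ).toLinearMap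

section MomentFunctional

variable (Φ : ℕ → ℂ[X])

theorem momentFunctional_C_mul_T (a : ℂ) (k : ℤ) :
    momentFunctional Φ (LaurentPolynomial.C a * T k) =
      a * if 0 ≤ k then moment Φ k.toNat else starRingEnd ℂ (moment Φ (-k).toNat) := by
  rw [← single_eq_C_mul_T]
  exact Finsupp.linearCombination_single ℂ a k

theorem momentFunctional_one : momentFunctional Φ 1 = 1 := by
  simpa [moment] using momentFunctional_C_mul_T Φ 1 0

theorem momentFunctional_barInv (f : LaurentPolynomial ℂ) :
    momentFunctional Φ (barInv f) = starRingEnd ℂ (momentFunctional Φ f) := by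
  induction f using LaurentPolynomial.induction_on' with
  | add f g hf hg => simp only [map_add, hf, hg]
  | C_mul_T k a =>
    rw [map_mul, barInv_C, barInv_T, momentFunctional_C_mul_T, momentFunctional_C_mul_T, map_mul]
    congr 1
    rcases lt_trichotomy k 0 with hk | rfl | hk
    · simp [hk.le, hk.not_ge]
    · simp [moment]
    · simp [hk.le, hk.not_ge]

theorem momentFunctional_toLaurent_eq_zero (hΦ : ∀ n, IsMonicOfDegree (Φ n) n) (n : ℕ) :
    momentFunctional Φ (toLaurent (Φ (n + 1))) = 0 := by
  have hmonomial (k : ℕ) (c : ℂ) :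
      momentFunctional Φ (toLaurent (monomial k c)) = c * moment Φ k := by
    simpa using momentFunctional_C_mul_T Φ c k
  rw [(Φ (n + 1)).as_sum_range' (n + 2) (by rw [(hΦ _).natDegree_eq]; omega), map_sum, map_sum]
  simp_rw [hmonomial]
  rw [sum_range_succ, (hΦ _).coeff_self, one_mul, moment_succ, add_neg_cancel]

end MomentFunctional

def kappa (α : ℕ → ℂ) (n : ℕ) : ℝ := ∏ j ∈ range n, (1 - Complex.normSq (α j))

theorem kappa_succ (α : ℕ → ℂ) (n : ℕ) :
    kappa α (n + 1) = kappa α n * (1 - Complex.normSq (α n)) :=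
  prod_range_succ _ _

theorem kappa_pos {α : ℕ → ℂ} (hα : ∀ n, ‖α n‖ < 1) (n : ℕ) : 0 < kappa α n :=
  prod_pos fun j _ => by
    rw [sub_pos, Complex.normSq_eq_norm_sq]
    exact pow_lt_one₀ (norm_nonneg _) (hα j) two_ne_zero

section Szego

variable {Φ : ℕ → ℂ[X]} {α : ℕ → ℂ} {L : LaurentPolynomial ℂ →ₗ[ℂ] ℂ}
  (hΦ : ∀ n, IsMonicOfDegree (Φ n) n)
  (hrec : ∀ n, Φ (n + 1) = X * Φ n -
    Polynomial.C (starRingEnd ℂ (α n)) * reflect n ((Φ n).map (starRingEnd ℂ)))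
  (hL : ∀ f, L (barInv f) = starRingEnd ℂ (L f))
include hΦ hrec hL

theorem szego_moment_succ (n : ℕ) (k : ℤ) :
    L (toLaurent (Φ (n + 1)) * T (-k)) =
      L (toLaurent (Φ n) * T (1 - k)) -
        starRingEnd ℂ (α n) * starRingEnd ℂ (L (toLaurent (Φ n) * T (k - n))) := by
  have hshift :
      T n * barInv (toLaurent (Φ n)) * T (-k) = barInv (toLaurent (Φ n) * T (k - n)) := by
    rw [map_mul, barInv_T, mul_right_comm, ← T_add, neg_sub, sub_eq_add_neg, mul_comm]
  rw [hrec, map_sub, map_mul toLaurent, Polynomial.toLaurent_C_mul_eq, toLaurent_X,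
    toLaurent_reflect_map_conj (hΦ n).natDegree_eq, sub_mul, map_sub,
    ← LaurentPolynomial.smul_eq_C_mul, smul_mul_assoc, map_smul, hshift, hL, smul_eq_mul,
    mul_comm (T 1), mul_assoc, ← T_add, ← sub_eq_add_neg]

theorem szego_moment_eq_zero (hL0 : ∀ n, L (toLaurent (Φ (n + 1))) = 0) (n : ℕ) :
    ∀ k : ℤ, 0 ≤ k → k < n → L (toLaurent (Φ n) * T (-k)) = 0 := by
  induction n with
  | zero => intro k hk hkn; omega
  | succ n ih =>
    intro k hk hkn
    obtain rfl | hk := hk.eq_or_lt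
    · rw [neg_zero, T_zero, mul_one, hL0]
    · rw [szego_moment_succ hΦ hrec hL, show 1 - k = -(k - 1) by ring, ih (k - 1) (by omega)
        (by omega), show k - n = -(n - k) by ring, ih (n - k) (by omega) (by omega), map_zero,
        mul_zero, sub_zero]

theorem szego_moment_self (hL1 : L 1 = 1) (hL0 : ∀ n, L (toLaurent (Φ (n + 1))) = 0) (n : ℕ) :
    L (toLaurent (Φ n) * T (-n)) = kappa α n := by
  induction n with
  | zero => simp [isMonicOfDegree_zero_iff.mp (hΦ 0), hL1, kappa]
  | succ n ih =>
    have hT1 : L (toLaurent (Φ n) * T 1) = starRingEnd ℂ (α n) * kappa α n := by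
      have h := szego_moment_succ hΦ hrec hL n 0
      rw [neg_zero, T_zero, mul_one, hL0, sub_zero, zero_sub, ih, Complex.conj_ofReal] at h
      linear_combination -h
    rw [szego_moment_succ hΦ hrec hL, show 1 - ((n + 1 : ℕ) : ℤ) = -n by push_cast; ring, ih,
      show ((n + 1 : ℕ) : ℤ) - n = 1 by push_cast; ring, hT1, map_mul, Complex.conj_conj,
      Complex.conj_ofReal, kappa_succ]
    push_cast
    rw [Complex.normSq_eq_conj_mul_self]
    ring

theorem pairing_szego_of_le (hL1 : L 1 = 1) (hL0 : ∀ n, L (toLaurent (Φ (n + 1))) = 0)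
    {m n : ℕ} (hnm : n ≤ m) :
    pairing L (Φ m) (Φ n) = if m = n then (kappa α n : ℂ) else 0 := by
  have hX (k : ℕ) (hk : k < m) : pairing L (Φ m) (X ^ k) = 0 := by
    rw [pairing_apply, toLaurent_X_pow, barInv_T]
    exact szego_moment_eq_zero hΦ hrec hL hL0 m k (by positivity) (by exact_mod_cast hk)
  rw [linearMap_apply_eq_coeff_smul (isMonicOfDegree_X_pow ℂ) (pairing L (Φ m)) hX
      ((hΦ n).natDegree_eq.le.trans hnm),
    pairing_apply, toLaurent_X_pow, barInv_T, szego_moment_self hΦ hrec hL hL1 hL0]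
  obtain rfl | hlt := hnm.eq_or_lt
  · simp [(hΦ n).coeff_self]
  · simp [coeff_eq_zero_of_natDegree_lt ((hΦ n).natDegree_eq.trans_lt hlt), hlt.ne']

theorem pairing_szego (hL1 : L 1 = 1) (hL0 : ∀ n, L (toLaurent (Φ (n + 1))) = 0) (m n : ℕ) :
    pairing L (Φ m) (Φ n) = if m = n then (kappa α n : ℂ) else 0 := by
  rcases le_total n m with hnm | hmn
  · exact pairing_szego_of_le hΦ hrec hL hL1 hL0 hnm
  · rw [pairing_swap L hL, pairing_szego_of_le hΦ hrec hL hL1 hL0 hmn]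
    by_cases h : n = m
    · subst h; simp
    · simp [h, Ne.symm h]

end Szego

end OPUC

theorem verblunsky_linear_functional_general (Φ : ℕ → Polynomial ℂ) (hmon : ∀ n, (Φ n).Monic)
    (hdeg : ∀ n, (Φ n).natDegree = n) :
    (∃ α : ℕ → ℂ, (∀ n, ‖α n‖ < 1) ∧
        ∀ n : ℕ, Φ (n + 1) =
          Polynomial.X * Φ n -
            Polynomial.C ((starRingEnd ℂ) (α n)) *
              Polynomial.reflect n ((Φ n).map (starRingEnd ℂ))) ↔
      (∃! L : LaurentPolynomial ℂ →ₗ[ℂ] ℂ, L 1 = 1 ∧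
        ∃ κ : ℕ → ℝ, (∀ n, 0 < κ n) ∧
          ∀ m n : ℕ,
            L (Polynomial.toLaurent (Φ m) * polyBarInv (Φ n)) =
              if m = n then (κ n : ℂ) else 0) := by
  have hΦ (n : ℕ) : IsMonicOfDegree (Φ n) n := ⟨hdeg n, hmon n⟩
  simp only [← OPUC.pairing_eq_polyBarInv]
  constructor
  · rintro ⟨α, hα, hrec⟩
    have hL1 := OPUC.momentFunctional_one Φ
    have horth := OPUC.pairing_szego hΦ hrec (OPUC.momentFunctional_barInv Φ) hL1
      (OPUC.momentFunctional_toLaurent_eq_zero Φ hΦ)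
    refine ⟨OPUC.momentFunctional Φ, ⟨hL1, OPUC.kappa α, OPUC.kappa_pos hα, horth⟩, ?_⟩
    rintro L ⟨hL1', κ, -, horth'⟩
    exact OPUC.eq_of_pairing_eq_zero_of_ne hΦ hL1' hL1
      (fun m n h => by rw [horth', if_neg h]) (fun m n h => by rw [horth, if_neg h])
  · rintro ⟨L, ⟨-, κ, hκ, horth⟩, -⟩
    choose α hα hrec using OPUC.exists_szego_step hΦ horth hκ
    exact ⟨α, hα, hrec⟩

/-- the linear functional version of Verblunsky's theorem. -/
theorem verblunsky_linear_functional (Φ : ℕ → Polynomial ℂ) (hmon : ∀ n, (Φ n).Monic)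
    (hdeg : ∀ n, (Φ n).natDegree = n) (hΦ0 : Φ 0 = 1) :
    (∃ α : ℕ → ℂ, (∀ n, ‖α n‖ < 1) ∧
        ∀ n : ℕ, Φ (n + 1) =
          Polynomial.X * Φ n -
            Polynomial.C ((starRingEnd ℂ) (α n)) *
              Polynomial.reflect n ((Φ n).map (starRingEnd ℂ))) ↔
      (∃! L : LaurentPolynomial ℂ →ₗ[ℂ] ℂ, L 1 = 1 ∧
        ∃ κ : ℕ → ℝ, (∀ n, 0 < κ n) ∧
          ∀ m n : ℕ,
            L (Polynomial.toLaurent (Φ m) * polyBarInv (Φ n)) =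
              if m = n then (κ n : ℂ) else 0) :=
  verblunsky_linear_functional_general Φ hmon hdeg

end
end

section
/- For every integer m and every nonnegative integer n, det((μ_{m+i-j})_{0≤i,j≤n}) = (∏_{k=0}^{n-1}(1-|α_k|²)^{n-k}) · det((μ_{m+i,0,j})_{0≤i,j≤n}), where μ_{m+i,0,j} = L(z^{-(m+i)}·Φ_j(z)) / ⟨Φ_j(z), Φ_j(z)⟩ and the empty product (n = 0) is interpreted as 1. -/
open Polynomial LaurentPolynomial Finset

noncomputable section

/-! Right multiplication by the unitriangular matrix of coefficients of `Φ_0, …, Φ_n` turns the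
`j`-th column `(μ_{m+i-j})_i` of the Toeplitz matrix into `(L(z^{-(m+i)} Φ_j))_i` without changing
the determinant; dividing column `j` by `⟨Φ_j, Φ_j⟩ = ∏_{k<j} (1 - |α_k|²) ≠ 0` then produces the
factor `∏_{j≤n} ∏_{k<j} (1 - |α_k|²) = ∏_{k<n} (1 - |α_k|²)^{n-k}`. -/

namespace Polynomial

theorem natDegree_C_mul_reflect_le {R : Type*} [Semiring R] (a : R) {p : R[X]} {N : ℕ}
    (hp : p.natDegree ≤ N) : (C a * reflect N p).natDegree ≤ N :=
  (natDegree_C_mul_le _ _).trans (natDegree_reflect_le.trans (max_le le_rfl hp))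

theorem det_mul_coeff_of_monic {R : Type*} [CommRing R] {n : ℕ} (A : Matrix (Fin n) (Fin n) R)
    (p : ℕ → R[X]) (hmonic : ∀ j, (p j).Monic) (hdeg : ∀ j, (p j).natDegree = j) :
    (A * Matrix.of fun k j : Fin n => (p j).coeff k).det = A.det := by
  have hU : Matrix.IsUpperTriangular (Matrix.of fun k j : Fin n => (p j).coeff k) :=
    fun k j hjk => coeff_eq_zero_of_natDegree_lt (by rw [hdeg]; exact_mod_cast hjk)
  rw [Matrix.det_mul, Matrix.det_of_isUpperTriangular hU, prod_eq_one, mul_one]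
  intro j _
  simpa only [Matrix.of_apply, hdeg] using (hmonic j).coeff_natDegree

end Polynomial

theorem LaurentPolynomial.map_T_mul_toLaurent {R M : Type*} [CommSemiring R] [AddCommMonoid M]
    [Module R M] (L : LaurentPolynomial R →ₗ[R] M) (e : ℤ) {p : R[X]} {N : ℕ}
    (hN : p.natDegree < N) :
    L (T e * p.toLaurent) = ∑ k ∈ range N, p.coeff k • L (T (e + k)) := by
  conv_lhs => rw [p.as_sum_range' N hN]
  simp only [map_sum, Finset.mul_sum, Polynomial.toLaurent_C_mul_T, ← smul_eq_C_mul,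
    mul_smul_comm, ← T_add, map_smul]

theorem Finset.prod_range_succ_prod_range_eq_prod_pow {M : Type*} [CommMonoid M] (c : ℕ → M) (n : ℕ) :
    ∏ j ∈ range (n + 1), ∏ k ∈ range j, c k = ∏ k ∈ range n, c k ^ (n - k) := by
  induction n with
  | zero => simp
  | succ n ih =>
    calc _ = (∏ k ∈ range (n + 1), c k ^ (n - k)) * ∏ k ∈ range (n + 1), c k := by
          rw [prod_range_succ, ih, prod_range_succ (fun k => c k ^ (n - k)), Nat.sub_self,
            pow_zero, mul_one]
      _ = _ := by
          rw [← prod_mul_distrib]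
          refine prod_congr rfl fun k hk => ?_
          rw [← pow_succ, Nat.sub_add_comm (mem_range_succ_iff.1 hk)]

theorem szego_monic_and_natDegree (α : ℕ → ℂ) (n : ℕ) :
    (szego α n).Monic ∧ (szego α n).natDegree = n := by
  induction n with
  | zero => exact ⟨monic_one, natDegree_one⟩
  | succ n ih =>
    obtain ⟨hmonic, hdeg⟩ := ih
    have hX : (X * szego α n).natDegree = n + 1 := by rw [natDegree_X_mul hmonic.ne_zero, hdeg]
    have hlow : (Polynomial.C (starRingEnd ℂ (α n)) *
        reflect n ((szego α n).map (starRingEnd ℂ))).natDegree < (X * szego α n).natDegree :=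
      hX ▸ Nat.lt_succ_of_le (natDegree_C_mul_reflect_le _ (natDegree_map_le.trans hdeg.le))
    rw [szego]
    exact ⟨(monic_X.mul hmonic).sub_of_left (degree_lt_degree hlow),
      (natDegree_sub_eq_left_of_natDegree_lt hlow).trans hX⟩

theorem Complex.ofReal_one_sub_normSq_ne_zero {z : ℂ} (hz : ‖z‖ < 1) :
    ((1 - normSq z : ℝ) : ℂ) ≠ 0 := by
  rw [ofReal_ne_zero, sub_ne_zero, ne_comm, normSq_eq_norm_sq]
  exact (pow_lt_one₀ (norm_nonneg z) hz two_ne_zero).ne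

theorem det_toeplitz_eq_det_genMom_general (α : ℕ → ℂ) (hα : ∀ k, ‖α k‖ < 1)
    (L : LaurentPolynomial ℂ →ₗ[ℂ] ℂ)
    (m : ℤ) (n : ℕ) :
    (Matrix.of fun i j : Fin (n + 1) =>
        L (LaurentPolynomial.T (-(m + (i : ℤ) - (j : ℤ))))).det =
      (∏ k ∈ Finset.range n, ((1 - Complex.normSq (α k) : ℝ) : ℂ) ^ (n - k)) *
        (Matrix.of fun i j : Fin (n + 1) =>
          L (LaurentPolynomial.T (-(m + (i : ℤ))) * Polynomial.toLaurent (szego α j)) /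
            ∏ k ∈ Finset.range (j : ℕ), ((1 - Complex.normSq (α k) : ℝ) : ℂ)).det := by
  set c : ℕ → ℂ := fun k => ((1 - Complex.normSq (α k) : ℝ) : ℂ)
  have hszego := szego_monic_and_natDegree α
  rw [← det_mul_coeff_of_monic _ (szego α) (fun j => (hszego j).1) (fun j => (hszego j).2),
    ← prod_range_succ_prod_range_eq_prod_pow, ← Fin.prod_univ_eq_prod_range (fun j => ∏ k ∈ range j, c k),
    ← Matrix.det_mul_row]
  congr 1
  ext i j
  have hj : (szego α j).natDegree < n + 1 := (hszego j).2.symm ▸ j.isLt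
  rw [Matrix.mul_apply, Matrix.of_apply, Matrix.of_apply,
    mul_div_cancel₀ _ (prod_ne_zero_iff.2 fun k _ => Complex.ofReal_one_sub_normSq_ne_zero (hα k)),
    map_T_mul_toLaurent L _ hj, ← Fin.sum_univ_eq_sum_range]
  refine sum_congr rfl fun k _ => ?_
  simp only [Matrix.of_apply, smul_eq_mul]
  rw [mul_comm]
  congr 3
  ring

/-- `det (μ_{m+i-j}) = ∏_{k<n} (1-|α_k|²)^{n-k} · det (μ_{m+i,0,j})`. -/
theorem det_toeplitz_eq_det_genMom (α : ℕ → ℂ) (hα : ∀ k, ‖α k‖ < 1)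
    (L : LaurentPolynomial ℂ →ₗ[ℂ] ℂ) (hL1 : L 1 = 1)
    (hLphi : ∀ k : ℕ, 1 ≤ k → L (Polynomial.toLaurent (szego α k)) = 0)
    (hLbar : ∀ k : ℕ, 1 ≤ k → L (polyBarInv (szego α k)) = 0)
    (m : ℤ) (n : ℕ) :
    (Matrix.of fun i j : Fin (n + 1) =>
        L (LaurentPolynomial.T (-(m + (i : ℤ) - (j : ℤ))))).det =
      (∏ k ∈ Finset.range n, ((1 - Complex.normSq (α k) : ℝ) : ℂ) ^ (n - k)) *
        (Matrix.of fun i j : Fin (n + 1) =>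
          L (LaurentPolynomial.T (-(m + (i : ℤ))) * Polynomial.toLaurent (szego α j)) /
            ∏ k ∈ Finset.range (j : ℕ), ((1 - Complex.normSq (α k) : ℝ) : ℂ)).det :=
  det_toeplitz_eq_det_genMom_general α hα L m n

end
end

section
/- For every nonnegative integer n, the determinant of the Toeplitz matrix (μ_{i-j})_{0≤i,j≤n} equals ∏_{k=0}^{n-1}(1-|α_k|²)^{n-k}, where the empty product (n = 0) is interpreted as 1. -/
open Polynomial LaurentPolynomial Finset

noncomputable section

/-!
Multiplying the Toeplitz matrix on the left by the unipotent lower-triangular matrix of the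
conjugated coefficients of `Φ_0, …, Φ_n` gives the matrix `(L(z^j Φ̄_i(1/z)))_{i,j}`. This matrix is
upper triangular by the orthogonality of `Φ_i` to `1, …, z^{i-1}`, and its diagonal entries are the
norms `⟨Φ_i, Φ_i⟩ = ∏_{k<i} (1 - |α_k|²)`; both facts follow from Szegő's recurrence by induction.
-/

theorem Polynomial.toLaurent_reflect {R : Type*} [CommSemiring R] {p : R[X]} {N : ℕ}
    (h : p.natDegree ≤ N) : toLaurent (p.reflect N) = T N * invert (toLaurent p) := by
  have hsplit : p.reflect N = X ^ (N - p.natDegree) * p.reverse := by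
    rw [reverse, ← reflect_one, ← reflect_mul _ _ (natDegree_one.trans_le (Nat.zero_le _)) le_rfl,
      one_mul, Nat.sub_add_cancel h]
  rw [hsplit, map_mul, toLaurent_reverse, map_pow, toLaurent_X, T_pow, mul_left_comm, ← T_add,
    mul_one, ← Nat.cast_add, Nat.sub_add_cancel h, mul_comm]

theorem LaurentPolynomial.linearMap_C_mul {R M : Type*} [CommSemiring R] [AddCommMonoid M]
    [Module R M] (L : R[T;T⁻¹] →ₗ[R] M) (a : R) (f : R[T;T⁻¹]) : L (C a * f) = a • L f := by
  rw [← smul_eq_C_mul, map_smul]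

theorem Finset.prod_range_succ_prod_range {M : Type*} [CommMonoid M] (f : ℕ → M) (n : ℕ) :
    ∏ i ∈ range (n + 1), ∏ j ∈ range i, f j = ∏ k ∈ range n, f k ^ (n - k) := by
  induction n with
  | zero => simp
  | succ n ih =>
    have hpow : ∀ k ∈ range (n + 1), f k ^ (n + 1 - k) = f k ^ (n - k) * f k := fun k hk => by
      rw [Nat.sub_add_comm (Nat.le_of_lt_succ (mem_range.mp hk)), pow_succ]
    rw [prod_range_succ, ih, prod_congr rfl hpow, prod_mul_distrib,
      prod_range_succ (fun k => f k ^ (n - k)) n, Nat.sub_self, pow_zero, mul_one]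

theorem polyBarInv_eq_invert (p : ℂ[X]) :
    polyBarInv p = invert (toLaurent (p.map (starRingEnd ℂ))) := by
  conv_rhs => rw [p.as_sum_support]
  rw [polyBarInv, Polynomial.sum, Polynomial.map_sum, map_sum, map_sum]
  refine Finset.sum_congr rfl fun i _ => ?_
  rw [Polynomial.map_monomial, ← Polynomial.C_mul_X_pow_eq_monomial, toLaurent_C_mul_X_pow,
    map_mul, invert_C, invert_T]

section Szego

variable (α : ℕ → ℂ)

theorem natDegree_szego_le (n : ℕ) : (szego α n).natDegree ≤ n := by
  induction n with
  | zero => simp [szego]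
  | succ n ih =>
    have hrefl : (((szego α n).map (starRingEnd ℂ)).reflect n).natDegree ≤ n :=
      natDegree_reflect_le.trans (max_le le_rfl (natDegree_map_le.trans ih))
    refine (natDegree_sub_le _ _).trans (max_le ?_ ?_)
    · exact natDegree_mul_le.trans (by rw [natDegree_X]; omega)
    · exact natDegree_C_mul_le _ _ |>.trans (hrefl.trans n.le_succ)

theorem coeff_szego_self (n : ℕ) : (szego α n).coeff n = 1 := by
  induction n with
  | zero => simp [szego]
  | succ n ih =>
    have hrefl : (((szego α n).map (starRingEnd ℂ)).reflect n).natDegree < n + 1 :=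
      Nat.lt_succ_of_le <| natDegree_reflect_le.trans
        (max_le le_rfl (natDegree_map_le.trans (natDegree_szego_le α n)))
    rw [szego, coeff_sub, coeff_X_mul, ih, coeff_C_mul, coeff_eq_zero_of_natDegree_lt hrefl,
      mul_zero, sub_zero]

theorem toLaurent_szego_succ (n : ℕ) :
    toLaurent (szego α (n + 1)) =
      T 1 * toLaurent (szego α n) -
        LaurentPolynomial.C (starRingEnd ℂ (α n)) * (T n * polyBarInv (szego α n)) := by
  rw [szego, map_sub, map_mul, map_mul, toLaurent_X, toLaurent_C,
    toLaurent_reflect (natDegree_map_le.trans (natDegree_szego_le α n)), polyBarInv_eq_invert]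

theorem polyBarInv_szego_succ (n : ℕ) :
    polyBarInv (szego α (n + 1)) =
      T (-1) * polyBarInv (szego α n) -
        LaurentPolynomial.C (α n) * (T (-n) * toLaurent (szego α n)) := by
  have hconj : (starRingEnd ℂ).comp (starRingEnd ℂ) = RingHom.id ℂ := RingHom.ext Complex.conj_conj
  rw [polyBarInv_eq_invert, szego, Polynomial.map_sub, Polynomial.map_mul, Polynomial.map_mul,
    Polynomial.map_X, Polynomial.map_C, ← reflect_map, Polynomial.map_map, hconj,
    Polynomial.map_id, map_sub, map_mul, map_mul, toLaurent_X, toLaurent_C,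
    toLaurent_reflect (natDegree_szego_le α n), map_sub, map_mul, map_mul, map_mul, invert_T,
    invert_C, invert_T, involutive_invert, polyBarInv_eq_invert, Complex.conj_conj]

/-- `⟨Φ_n, Φ_n⟩`, the squared norm of `Φ_n` in the inner product defined by `L`. -/
def szegoNormSq (n : ℕ) : ℂ := ∏ j ∈ range n, ((1 - Complex.normSq (α j) : ℝ) : ℂ)

theorem szegoNormSq_succ (n : ℕ) :
    szegoNormSq α (n + 1) = szegoNormSq α n * (1 - α n * starRingEnd ℂ (α n)) := by
  rw [szegoNormSq, prod_range_succ, Complex.ofReal_sub, Complex.ofReal_one, Complex.mul_conj]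
  rfl

def szegoCoeffMatrix (n : ℕ) : Matrix (Fin (n + 1)) (Fin (n + 1)) ℂ :=
  Matrix.of fun i k => starRingEnd ℂ ((szego α i).coeff k)

theorem det_szegoCoeffMatrix (n : ℕ) : (szegoCoeffMatrix α n).det = 1 := by
  rw [Matrix.det_of_isLowerTriangular _ fun i j hij => by
    simp [szegoCoeffMatrix, coeff_eq_zero_of_natDegree_lt
      ((natDegree_szego_le α i).trans_lt (show (i : ℕ) < j from hij))]]
  exact Finset.prod_eq_one fun i _ => by simp [szegoCoeffMatrix, coeff_szego_self]

variable {α} {L : LaurentPolynomial ℂ →ₗ[ℂ] ℂ}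

theorem apply_T_mul_toLaurent_szego_succ (m : ℤ) (n : ℕ) :
    L (T m * toLaurent (szego α (n + 1))) =
      L (T (m + 1) * toLaurent (szego α n)) -
        starRingEnd ℂ (α n) * L (T (m + n) * polyBarInv (szego α n)) := by
  rw [toLaurent_szego_succ, mul_sub, ← mul_assoc, ← T_add, mul_left_comm (T m),
    ← mul_assoc (T m), ← T_add, map_sub, linearMap_C_mul, smul_eq_mul]

theorem apply_T_mul_polyBarInv_szego_succ (m : ℤ) (n : ℕ) :
    L (T m * polyBarInv (szego α (n + 1))) =
      L (T (m - 1) * polyBarInv (szego α n)) - α n * L (T (m - n) * toLaurent (szego α n)) := by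
  rw [polyBarInv_szego_succ, mul_sub, ← mul_assoc, ← T_add, mul_left_comm (T m),
    ← mul_assoc (T m), ← T_add, map_sub, linearMap_C_mul, smul_eq_mul, ← sub_eq_add_neg,
    ← sub_eq_add_neg]

theorem apply_T_mul_szego_eq_zero
    (hLphi : ∀ k : ℕ, 1 ≤ k → L (toLaurent (szego α k)) = 0)
    (hLbar : ∀ k : ℕ, 1 ≤ k → L (polyBarInv (szego α k)) = 0) (n : ℕ) :
    (∀ m : ℤ, -n < m → m ≤ 0 → L (T m * toLaurent (szego α n)) = 0) ∧
      ∀ m : ℤ, 0 ≤ m → m < n → L (T m * polyBarInv (szego α n)) = 0 := by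
  induction n with
  | zero => exact ⟨fun m h1 h2 => by omega, fun m h1 h2 => by omega⟩
  | succ n ih =>
    obtain ⟨hphi, hbar⟩ := ih
    push_cast
    constructor
    · intro m h1 h2
      obtain rfl | hm := h2.eq_or_lt
      · simpa using hLphi (n + 1) le_add_self
      · rw [apply_T_mul_toLaurent_szego_succ, hphi _ (by omega) (by omega),
          hbar _ (by omega) (by omega), mul_zero, sub_zero]
    · intro m h1 h2
      obtain rfl | hm := h1.eq_or_lt
      · simpa using hLbar (n + 1) le_add_self
      · rw [apply_T_mul_polyBarInv_szego_succ, hbar _ (by omega) (by omega),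
          hphi _ (by omega) (by omega), mul_zero, sub_zero]

theorem apply_T_mul_szego_eq_szegoNormSq (hL1 : L 1 = 1)
    (hLphi : ∀ k : ℕ, 1 ≤ k → L (toLaurent (szego α k)) = 0)
    (hLbar : ∀ k : ℕ, 1 ≤ k → L (polyBarInv (szego α k)) = 0) (n : ℕ) :
    L (T (-n) * toLaurent (szego α n)) = szegoNormSq α n ∧
      L (T n * polyBarInv (szego α n)) = szegoNormSq α n := by
  induction n with
  | zero => simp [szego, szegoNormSq, polyBarInv_eq_invert, hL1]
  | succ n ih =>
    obtain ⟨hphi, hbar⟩ := ih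
    -- the orthogonality relations for `Φ_{n+1}` at `z^0` determine the neighbouring moments
    have hbar' : L (T (-1) * polyBarInv (szego α n)) = α n * szegoNormSq α n := by
      have h := hLbar (n + 1) le_add_self
      rwa [← one_mul (polyBarInv _), ← T_zero, apply_T_mul_polyBarInv_szego_succ, zero_sub,
        zero_sub, hphi, sub_eq_zero] at h
    have hphi' : L (T 1 * toLaurent (szego α n)) = starRingEnd ℂ (α n) * szegoNormSq α n := by
      have h := hLphi (n + 1) le_add_self
      rwa [← one_mul (toLaurent _), ← T_zero, apply_T_mul_toLaurent_szego_succ, zero_add,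
        zero_add, hbar, sub_eq_zero] at h
    constructor
    · rw [apply_T_mul_toLaurent_szego_succ, show -((n + 1 : ℕ) : ℤ) + 1 = -n by push_cast; ring,
        show -((n + 1 : ℕ) : ℤ) + n = -1 by push_cast; ring, hphi, hbar', szegoNormSq_succ]
      ring
    · rw [apply_T_mul_polyBarInv_szego_succ, show ((n + 1 : ℕ) : ℤ) - 1 = n by push_cast; ring,
        show ((n + 1 : ℕ) : ℤ) - n = 1 by push_cast; ring, hbar, hphi', szegoNormSq_succ]
      ring

theorem szegoCoeffMatrix_mul_toeplitz_apply (n : ℕ) (i j : Fin (n + 1)) :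
    (szegoCoeffMatrix α n * Matrix.of fun i j : Fin (n + 1) => L (T (-((i : ℤ) - (j : ℤ))))) i j =
      L (T j * polyBarInv (szego α i)) := by
  rw [polyBarInv, Polynomial.sum_over_range' _ (fun _ => by simp) (n + 1)
      ((natDegree_szego_le α i).trans_lt i.isLt), Finset.mul_sum, map_sum, Matrix.mul_apply,
    ← Fin.sum_univ_eq_sum_range]
  refine Finset.sum_congr rfl fun k _ => ?_
  simp only [szegoCoeffMatrix, Matrix.of_apply]
  rw [mul_left_comm, ← T_add, linearMap_C_mul, smul_eq_mul, neg_sub, sub_eq_add_neg]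

end Szego

theorem det_toeplitz_general (α : ℕ → ℂ)
    (L : LaurentPolynomial ℂ →ₗ[ℂ] ℂ) (hL1 : L 1 = 1)
    (hLphi : ∀ k : ℕ, 1 ≤ k → L (Polynomial.toLaurent (szego α k)) = 0)
    (hLbar : ∀ k : ℕ, 1 ≤ k → L (polyBarInv (szego α k)) = 0)
    (n : ℕ) :
    (Matrix.of fun i j : Fin (n + 1) =>
        L (LaurentPolynomial.T (-((i : ℤ) - (j : ℤ))))).det =
      ∏ k ∈ Finset.range n, ((1 - Complex.normSq (α k) : ℝ) : ℂ) ^ (n - k) := by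
  set M := Matrix.of fun i j : Fin (n + 1) => L (LaurentPolynomial.T (-((i : ℤ) - (j : ℤ))))
  have hupper : (szegoCoeffMatrix α n * M).IsUpperTriangular := fun i j hji => by
    rw [szegoCoeffMatrix_mul_toeplitz_apply]
    exact (apply_T_mul_szego_eq_zero hLphi hLbar i).2 j (Int.natCast_nonneg _)
      (by exact_mod_cast hji)
  calc M.det = (szegoCoeffMatrix α n * M).det := by
        rw [Matrix.det_mul, det_szegoCoeffMatrix, one_mul]
    _ = ∏ i : Fin (n + 1), szegoNormSq α i := by
        rw [Matrix.det_of_isUpperTriangular hupper]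
        exact Finset.prod_congr rfl fun i _ => by
          rw [szegoCoeffMatrix_mul_toeplitz_apply,
            (apply_T_mul_szego_eq_szegoNormSq hL1 hLphi hLbar i).2]
    _ = _ := by
        rw [Fin.prod_univ_eq_prod_range (szegoNormSq α), ← prod_range_succ_prod_range]
        rfl

/-- the determinant of the Toeplitz matrix `(μ_{i-j})_{0≤i,j≤n}`
equals `∏_{k<n} (1-|α_k|²)^{n-k}`. -/
theorem det_toeplitz (α : ℕ → ℂ) (hα : ∀ k, ‖α k‖ < 1)
    (L : LaurentPolynomial ℂ →ₗ[ℂ] ℂ) (hL1 : L 1 = 1)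
    (hLphi : ∀ k : ℕ, 1 ≤ k → L (Polynomial.toLaurent (szego α k)) = 0)
    (hLbar : ∀ k : ℕ, 1 ≤ k → L (polyBarInv (szego α k)) = 0)
    (n : ℕ) :
    (Matrix.of fun i j : Fin (n + 1) =>
        L (LaurentPolynomial.T (-((i : ℤ) - (j : ℤ))))).det =
      ∏ k ∈ Finset.range n, ((1 - Complex.normSq (α k) : ℝ) : ℂ) ^ (n - k) :=
  det_toeplitz_general α L hL1 hLphi hLbar n
end
end

section
/- Let (α_n)_{n≥0} be any sequence of nonzero complex numbers, with the convention α_{-1} = -1. Then for all nonnegative integers n, r, and s, Σ_{p ∈ Sch_{n,r,s}} wt_S(p) = Σ_{q ∈ 𝔏_{n,r,s}} wt_L(q). -/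
open Polynomial LaurentPolynomial Finset

noncomputable section

/-!
Split every path sum according to its first step. Writing `A_n(r)` for the Schröder sum from
height `r` over paths that do not start with a vertical step and `B_n(r)` for the sum over all
Schröder paths (`n` the horizontal distance, the end point fixed), one gets
`A_{n+1}(r) = B_n(r + 1) + w_H(r) B_n(r)` and `B_n(r) = A_n(r) + w_V(r) B_n(r - 1)`, whereas the
Łukasiewicz sums satisfy `L_{n+1}(r) = ∑_{h ≤ r + 1} w_L(r → h) L_n(h)`. Unrolling the recursion for
`B` gives `conj α_{r-1} · B_n(r) = ∑_{h ≤ r} conj α_{h-1} ∏_{h ≤ j < r} (1 - |α_j|²) A_n(h)`, and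
then `w_V(r + 1) + w_H(r) = -α_r conj α_{r-1}` (this is where `|α_r|² = α_r conj α_r` enters)
turns the Schröder recursion for `A` into the Łukasiewicz one, so `A = L` by induction on `n`.
-/

section LatticePath

variable {S : ℤ × ℤ → ℤ × ℤ → Prop} {w : ℤ × ℤ → ℤ × ℤ → ℂ} {p q : ℤ × ℤ} {l : List (ℤ × ℤ)}

def pathSum (S : ℤ × ℤ → ℤ × ℤ → Prop) (w : ℤ × ℤ → ℤ × ℤ → ℂ) (p q : ℤ × ℤ) : ℂ :=
  ∑ᶠ l ∈ {l | IsLatticePath S p l q}, pathWeight w p l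

theorem IsLatticePath.snd_start_nonneg (h : IsLatticePath S p l q) : 0 ≤ p.2 := by
  cases l
  exacts [h.2, h.1]

theorem IsLatticePath.snd_end_nonneg (h : IsLatticePath S p l q) : 0 ≤ q.2 := by
  induction l generalizing p with
  | nil => exact h.1 ▸ h.2
  | cons _ _ ih => exact ih h.2.2

theorem IsLatticePath.forall_mem {T : Set (ℤ × ℤ)} (hS : ∀ p st, S p st → st ∈ T)
    (h : IsLatticePath S p l q) : ∀ st ∈ l, st ∈ T := by
  induction l generalizing p with
  | nil => simp
  | cons a l ih => exact List.forall_mem_cons.mpr ⟨hS p a h.2.1, ih h.2.2⟩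

theorem IsLatticePath.mul_length_le (f : ℤ × ℤ →+ ℤ) {c : ℤ} (hS : ∀ p st, S p st → c ≤ f st)
    (h : IsLatticePath S p l q) : c * l.length ≤ f q - f p := by
  induction l generalizing p with
  | nil => simp [h.1]
  | cons st l ih =>
    have := ih h.2.2
    have := hS p st h.2.1
    simp only [map_add, List.length_cons] at *
    push_cast
    linarith

theorem IsLatticePath.fst_lt_of_cons {a : ℤ × ℤ} (hS : ∀ p st, S p st → 0 ≤ st.1)
    (h : IsLatticePath S p (a :: l) q) (ha : 0 < a.1) : p.1 < q.1 := by
  have := h.2.2.mul_length_le (AddMonoidHom.fst ℤ ℤ) (c := 0) hS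
  simp only [zero_mul, AddMonoidHom.coe_fst, Prod.fst_add] at this
  omega

theorem pathSum_of_snd_neg (hp : p.2 < 0) : pathSum S w p q = 0 := by
  rw [pathSum, Set.eq_empty_of_forall_notMem (s := {l | IsLatticePath S p l q})
    fun _ hl => hp.not_ge hl.snd_start_nonneg, finsum_mem_empty]

theorem setOf_isLatticePath_head_mem (T : Finset (ℤ × ℤ)) (hp : 0 ≤ p.2) (hT : ∀ st ∈ T, S p st) :
    {l | IsLatticePath S p l q ∧ ∃ st ∈ T, l.head? = some st} =
      ⋃ st ∈ (T : Set (ℤ × ℤ)), List.cons st '' {l | IsLatticePath S (p + st) l q} := by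
  ext (_ | ⟨a, l⟩)
  · simp
  · simp only [Set.mem_ofPred_eq, List.head?_cons, Option.some.injEq, Set.mem_iUnion,
      Set.mem_image, List.cons.injEq, exists_prop]
    constructor
    · rintro ⟨h, _, ha, rfl⟩
      exact ⟨a, ha, l, h.2.2, rfl, rfl⟩
    · rintro ⟨_, ha, _, hl, rfl, rfl⟩
      exact ⟨⟨hp, hT _ ha, hl⟩, _, ha, rfl⟩

theorem finsum_isLatticePath_head_mem (T : Finset (ℤ × ℤ)) (hp : 0 ≤ p.2)
    (hT : ∀ st ∈ T, S p st) (hfin : ∀ st ∈ T, {l | IsLatticePath S (p + st) l q}.Finite) :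
    ∑ᶠ l ∈ {l | IsLatticePath S p l q ∧ ∃ st ∈ T, l.head? = some st}, pathWeight w p l =
      ∑ st ∈ T, w p st * pathSum S w (p + st) q := by
  have hdisj : (T : Set (ℤ × ℤ)).PairwiseDisjoint
      fun st => List.cons st '' {l | IsLatticePath S (p + st) l q} := by
    intro a _ b _ hab
    simp only [Function.onFun, Set.disjoint_left]
    rintro _ ⟨l, -, rfl⟩ ⟨l', -, h⟩
    exact hab (List.cons_eq_cons.mp h).1.symm
  rw [setOf_isLatticePath_head_mem T hp hT, finsum_mem_biUnion hdisj T.finite_toSet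
    fun st hst => (hfin st hst).image _, finsum_mem_coe_finset]
  refine Finset.sum_congr rfl fun st _ => ?_
  rw [finsum_mem_image List.cons_injective.injOn, pathSum, mul_finsum_mem]
  rfl

theorem Set.finite_setOf_length_le_forall_mem {α : Type*} {s : Set α} (hs : s.Finite) (N : ℕ) :
    {l : List α | l.length ≤ N ∧ ∀ a ∈ l, a ∈ s}.Finite := by
  have := hs.to_subtype
  refine ((List.finite_length_le s N).image (List.map (↑))).subset ?_
  rintro l ⟨hN, hl⟩
  lift l to List s using hl
  exact ⟨l, by simpa using hN, rfl⟩

end LatticePath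

section Lukasiewicz

variable {p q : ℤ × ℤ} {l : List (ℤ × ℤ)}

theorem IsLatticePath.lukaStep_bounds (h : IsLatticePath lukaStep p l q) :
    ∀ st ∈ l, st.1 = 1 ∧ -(p.2 + l.length) ≤ st.2 ∧ st.2 ≤ 1 := by
  induction l generalizing p with
  | nil => simp
  | cons a l ih =>
    obtain ⟨-, ⟨ha₁, ha₂⟩, hl⟩ := h
    have hnext : 0 ≤ p.2 + a.2 := by simpa using hl.snd_start_nonneg
    refine List.forall_mem_cons.mpr ⟨⟨ha₁, ?_, ha₂⟩, fun st hst => ?_⟩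
    · simp only [List.length_cons]
      push_cast
      omega
    · obtain ⟨h₁, h₂, h₃⟩ := ih hl st hst
      simp only [Prod.snd_add, List.length_cons] at h₂ ⊢
      push_cast
      exact ⟨h₁, by omega, h₃⟩

theorem IsLatticePath.eq_nil_of_lukaStep (h : IsLatticePath lukaStep p l q) (hpq : p.1 = q.1) :
    l = [] := by
  cases l with
  | nil => rfl
  | cons a l =>
    have hS (p st : ℤ × ℤ) (h : lukaStep p st) : 0 ≤ st.1 := h.1 ▸ zero_le_one
    exact absurd hpq (h.fst_lt_of_cons hS (h.2.1.1 ▸ one_pos)).ne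

theorem finite_setOf_isLatticePath_lukaStep (p q : ℤ × ℤ) :
    {l | IsLatticePath lukaStep p l q}.Finite := by
  set N := (q.1 - p.1).toNat
  have hF : ({1} ×ˢ Set.Icc (-(p.2 + N)) 1 : Set (ℤ × ℤ)).Finite :=
    (Set.finite_singleton 1).prod (Set.finite_Icc _ _)
  refine (Set.finite_setOf_length_le_forall_mem hF N).subset fun l hl => ?_
  have hlen := hl.mul_length_le (AddMonoidHom.fst ℤ ℤ) (c := 1) fun _ _ h => h.1.ge
  simp only [one_mul, AddMonoidHom.coe_fst] at hlen
  refine ⟨by omega, fun st hst => ?_⟩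
  obtain ⟨h₁, h₂, h₃⟩ := hl.lukaStep_bounds st hst
  simp only [Set.mem_prod, Set.mem_singleton_iff, Set.mem_Icc]
  exact ⟨h₁, by omega, h₃⟩

theorem pathSum_lukaStep_eq_sum (w : ℤ × ℤ → ℤ × ℤ → ℂ) {x r : ℤ} (hr : 0 ≤ r) (hq : x ≠ q.1) :
    pathSum lukaStep w (x, r) q =
      ∑ h ∈ Icc 0 (r + 1), w (x, r) (1, h - r) * pathSum lukaStep w (x + 1, h) q := by
  set T := (Icc 0 (r + 1)).image fun h => ((1 : ℤ), h - r)
  have hset : {l | IsLatticePath lukaStep (x, r) l q} =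
      {l | IsLatticePath lukaStep (x, r) l q ∧ ∃ st ∈ T, l.head? = some st} := by
    ext (_ | ⟨a, l⟩)
    · exact iff_of_false (fun h => hq (congrArg Prod.fst h.1))
        fun h => hq (congrArg Prod.fst h.1.1)
    · simp only [Set.mem_ofPred_eq, List.head?_cons, Option.some.injEq, exists_eq_right',
        iff_self_and]
      rintro ⟨-, ⟨ha₁, ha₂⟩, hl⟩
      have : 0 ≤ r + a.2 := by simpa using hl.snd_start_nonneg
      exact mem_image.mpr ⟨r + a.2, mem_Icc.mpr ⟨this, by omega⟩, by ext <;> simp [ha₁]⟩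
  have hT : ∀ st ∈ T, lukaStep (x, r) st := by
    simp only [T, mem_image, mem_Icc]
    rintro _ ⟨h, ⟨-, hh⟩, rfl⟩
    exact ⟨rfl, by simp only; omega⟩
  rw [pathSum, hset, finsum_isLatticePath_head_mem T hr hT
    fun _ _ => finite_setOf_isLatticePath_lukaStep _ _, sum_image fun _ _ _ _ h => by simpa using h]
  simp [Prod.mk_add_mk]

end Lukasiewicz

section Schroeder

variable {p q : ℤ × ℤ}

def schroederSum (w : ℤ × ℤ → ℤ × ℤ → ℂ) (p q : ℤ × ℤ) : ℂ :=
  ∑ᶠ l ∈ {l | IsLatticePath schStep p l q ∧ l.head? ≠ some (0, -1)}, pathWeight w p l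

theorem finite_setOf_isLatticePath_schStep (p q : ℤ × ℤ) :
    {l | IsLatticePath schStep p l q}.Finite := by
  have hF : ({(1, 1), (1, 0), (0, -1)} : Set (ℤ × ℤ)).Finite := by simp
  refine (Set.finite_setOf_length_le_forall_mem hF (2 * (q.1 - p.1) + p.2).toNat).subset
    fun l hl => ⟨?_, hl.forall_mem fun _ _ h => h⟩
  have hlen := hl.mul_length_le (2 • AddMonoidHom.fst ℤ ℤ - AddMonoidHom.snd ℤ ℤ) (c := 1)
    (by rintro _ _ (rfl | rfl | rfl) <;> simp)
  have := hl.snd_end_nonneg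
  simp only [one_mul, AddMonoidHom.sub_apply, AddMonoidHom.smul_apply, AddMonoidHom.coe_fst,
    AddMonoidHom.coe_snd, Int.nsmul_eq_mul, Nat.cast_ofNat] at hlen
  omega

theorem IsLatticePath.eq_nil_of_schStep {l : List (ℤ × ℤ)} (h : IsLatticePath schStep p l q)
    (hhead : l.head? ≠ some (0, -1)) (hpq : p.1 = q.1) : l = [] := by
  cases l with
  | nil => rfl
  | cons a l =>
    refine absurd hpq (h.fst_lt_of_cons (by rintro _ _ (rfl | rfl | rfl) <;> simp) ?_).ne
    rcases h.2.1 with rfl | rfl | rfl <;> simp_all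

theorem schroederSum_eq_add (w : ℤ × ℤ → ℤ × ℤ → ℂ) {x r : ℤ} (hr : 0 ≤ r) (hq : x ≠ q.1) :
    schroederSum w (x, r) q = w (x, r) (1, 1) * pathSum schStep w (x + 1, r + 1) q +
      w (x, r) (1, 0) * pathSum schStep w (x + 1, r) q := by
  have hset : {l | IsLatticePath schStep (x, r) l q ∧ l.head? ≠ some (0, -1)} =
      {l | IsLatticePath schStep (x, r) l q ∧
        ∃ st ∈ ({(1, 1), (1, 0)} : Finset (ℤ × ℤ)), l.head? = some st} := by
    ext (_ | ⟨a, l⟩)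
    · exact iff_of_false (fun h => hq (congrArg Prod.fst h.1.1))
        fun h => hq (congrArg Prod.fst h.1.1)
    · simp only [Set.mem_ofPred_eq, List.head?_cons, ne_eq, Option.some.injEq, mem_insert,
        mem_singleton, exists_eq_or_imp, exists_eq_left]
      constructor
      · rintro ⟨hl, ha⟩
        refine ⟨hl, ?_⟩
        rcases hl.2.1 with rfl | rfl | rfl <;> simp_all
      · rintro ⟨hl, rfl | rfl⟩ <;> exact ⟨hl, by decide⟩
  rw [schroederSum, hset, finsum_isLatticePath_head_mem _ hr (by simp [schStep])
    fun _ _ => finite_setOf_isLatticePath_schStep _ _, sum_pair (by decide)]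
  simp [Prod.mk_add_mk]

theorem pathSum_schStep_eq_add (w : ℤ × ℤ → ℤ × ℤ → ℂ) {x r : ℤ} (hr : 0 ≤ r) :
    pathSum schStep w (x, r) q =
      schroederSum w (x, r) q + w (x, r) (0, -1) * pathSum schStep w (x, r - 1) q := by
  have hset : {l | IsLatticePath schStep (x, r) l q} =
      {l | IsLatticePath schStep (x, r) l q ∧ l.head? ≠ some (0, -1)} ∪
        {l | IsLatticePath schStep (x, r) l q ∧
          ∃ st ∈ ({(0, -1)} : Finset (ℤ × ℤ)), l.head? = some st} := by
    ext l
    simp only [Set.mem_union, Set.mem_ofPred_eq, mem_singleton, exists_eq_left]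
    tauto
  have hdisj : Disjoint {l | IsLatticePath schStep (x, r) l q ∧ l.head? ≠ some (0, -1)}
      {l | IsLatticePath schStep (x, r) l q ∧
        ∃ st ∈ ({(0, -1)} : Finset (ℤ × ℤ)), l.head? = some st} := by
    simp only [mem_singleton, exists_eq_left]
    exact Set.disjoint_left.mpr fun _ h₁ h₂ => h₁.2 h₂.2
  have hfin := finite_setOf_isLatticePath_schStep (x, r) q
  rw [pathSum, hset, finsum_mem_union hdisj (hfin.subset fun _ h => h.1)
    (hfin.subset fun _ h => h.1), finsum_isLatticePath_head_mem _ hr (by simp [schStep])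
    fun _ _ => finite_setOf_isLatticePath_schStep _ _, sum_singleton]
  simp [schroederSum, Prod.mk_add_mk, sub_eq_add_neg]

end Schroeder

section Weights

open ComplexConjugate

variable (α : ℕ → ℂ)

theorem az_ne_zero (hα : ∀ k, α k ≠ 0) (k : ℤ) : az α k ≠ 0 := by
  unfold az
  split_ifs
  exacts [hα _, by norm_num]

def downWeight (h r : ℤ) : ℂ :=
  conj (az α (h - 1)) * ∏ j ∈ Ico h r, ((1 - Complex.normSq (az α j) : ℝ) : ℂ)

theorem downWeight_self (r : ℤ) : downWeight α r r = conj (az α (r - 1)) := by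
  simp [downWeight]

theorem downWeight_add_one {h r : ℤ} (hh : h ≤ r) :
    downWeight α h (r + 1) = ((1 - Complex.normSq (az α r) : ℝ) : ℂ) * downWeight α h r := by
  rw [downWeight, downWeight, ← insert_Ico_right_eq_Ico_add_one hh, prod_insert (by simp)]
  ring

theorem wtLstep_up (x r : ℤ) : wtLstep α (x, r) (1, r + 1 - r) = 1 := by
  simp [wtLstep]

theorem wtLstep_down {x r h : ℤ} (hh : h ≤ r) :
    wtLstep α (x, r) (1, h - r) = -az α r * downWeight α h r := by
  rw [wtLstep, if_neg (by simp only; omega), downWeight]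
  simp only [add_sub_cancel]
  ring

theorem wtSstep_up (p : ℤ × ℤ) : wtSstep α p (1, 1) = 1 := rfl

theorem wtSstep_horizontal (p : ℤ × ℤ) :
    wtSstep α p (1, 0) = -(conj (az α (p.2 - 1)) / conj (az α p.2)) := rfl

theorem wtSstep_vertical (p : ℤ × ℤ) :
    wtSstep α p (0, -1) = conj (az α (p.2 - 2)) / conj (az α (p.2 - 1)) *
      ((1 - Complex.normSq (az α (p.2 - 1)) : ℝ) : ℂ) := rfl

variable {α} {a b : ℤ → ℂ} {x : ℤ}

theorem conj_az_mul_eq_sum_downWeight (hα : ∀ k, α k ≠ 0) (hb₀ : b (-1) = 0)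
    (hb : ∀ r, 0 ≤ r → b r = a r + wtSstep α (x, r) (0, -1) * b (r - 1)) {r : ℤ} (hr : -1 ≤ r) :
    conj (az α (r - 1)) * b r = ∑ h ∈ Icc 0 r, downWeight α h r * a h := by
  induction r, hr using Int.leInduction with
  | base => simp [hb₀]
  | succ r hr ih =>
    have hsum : ∑ h ∈ Icc 0 r, downWeight α h (r + 1) * a h =
        ((1 - Complex.normSq (az α r) : ℝ) : ℂ) * ∑ h ∈ Icc 0 r, downWeight α h r * a h := by
      rw [mul_sum]
      exact sum_congr rfl fun h hh => by rw [downWeight_add_one α (mem_Icc.1 hh).2, mul_assoc]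
    rw [← insert_Icc_right_eq_Icc_add_one (by omega), sum_insert (by simp), hsum, ← ih,
      downWeight_self, hb (r + 1) (by omega), wtSstep_vertical]
    have := (map_ne_zero (starRingEnd ℂ)).mpr (az_ne_zero α hα r)
    simp only [add_sub_cancel_right, show r + 1 - 2 = r - 1 by ring]
    field_simp

theorem sum_wtLstep_mul_eq (hα : ∀ k, α k ≠ 0) (hb₀ : b (-1) = 0)
    (hb : ∀ r, 0 ≤ r → b r = a r + wtSstep α (x, r) (0, -1) * b (r - 1)) {r : ℤ} (hr : 0 ≤ r) :
    ∑ h ∈ Icc 0 (r + 1), wtLstep α (x, r) (1, h - r) * a h =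
      b (r + 1) + wtSstep α (x, r) (1, 0) * b r := by
  have hdown : ∑ h ∈ Icc 0 r, wtLstep α (x, r) (1, h - r) * a h =
      -az α r * (conj (az α (r - 1)) * b r) := by
    rw [conj_az_mul_eq_sum_downWeight hα hb₀ hb (by omega), mul_sum]
    exact sum_congr rfl fun h hh => by rw [wtLstep_down α (mem_Icc.1 hh).2, mul_assoc]
  rw [← insert_Icc_right_eq_Icc_add_one (by omega), sum_insert (by simp), wtLstep_up, hdown,
    hb (r + 1) (by omega), wtSstep_vertical, wtSstep_horizontal]
  have := (map_ne_zero (starRingEnd ℂ)).mpr (az_ne_zero α hα r)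
  simp only [add_sub_cancel_right, show r + 1 - 2 = r - 1 by ring]
  field_simp
  rw [Complex.ofReal_sub, Complex.ofReal_one, ← Complex.mul_conj]
  ring

end Weights

theorem schroederSum_eq_pathSum_lukaStep_of_fst_eq (w w' : ℤ × ℤ → ℤ × ℤ → ℂ) {p q : ℤ × ℤ}
    (hpq : p.1 = q.1) : schroederSum w p q = pathSum lukaStep w' p q := by
  have hsets : {l | IsLatticePath schStep p l q ∧ l.head? ≠ some (0, -1)} =
      {l | IsLatticePath lukaStep p l q} := by
    ext l
    constructor
    · rintro ⟨hl, hhead⟩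
      obtain rfl := hl.eq_nil_of_schStep hhead hpq
      exact hl
    · intro hl
      obtain rfl := hl.eq_nil_of_lukaStep hpq
      exact ⟨hl, by simp⟩
  rw [schroederSum, pathSum, hsets]
  refine finsum_mem_congr rfl fun l hl => ?_
  obtain rfl := IsLatticePath.eq_nil_of_lukaStep hl hpq
  rfl

theorem schroederSum_eq_pathSum_lukaStep {α : ℕ → ℂ} (hα : ∀ k, α k ≠ 0) {n : ℕ} {x r : ℤ}
    (hr : 0 ≤ r) {q : ℤ × ℤ} (hq : q.1 = x + n) :
    schroederSum (wtSstep α) (x, r) q = pathSum lukaStep (wtLstep α) (x, r) q := by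
  induction n generalizing x r q with
  | zero => exact schroederSum_eq_pathSum_lukaStep_of_fst_eq _ _ (by simpa using hq.symm)
  | succ n ih =>
    have hx : x ≠ q.1 := by omega
    set a := fun h => schroederSum (wtSstep α) (x + 1, h) q
    set b := fun h => pathSum schStep (wtSstep α) (x + 1, h) q
    have hb₀ : b (-1) = 0 := pathSum_of_snd_neg (by norm_num)
    have hb : ∀ r, 0 ≤ r → b r = a r + wtSstep α (x, r) (0, -1) * b (r - 1) :=
      fun r hr => pathSum_schStep_eq_add _ hr
    calc schroederSum (wtSstep α) (x, r) q = b (r + 1) + wtSstep α (x, r) (1, 0) * b r := by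
          rw [schroederSum_eq_add _ hr hx, wtSstep_up, one_mul]
      _ = ∑ h ∈ Icc 0 (r + 1), wtLstep α (x, r) (1, h - r) * a h :=
          (sum_wtLstep_mul_eq hα hb₀ hb hr).symm
      _ = pathSum lukaStep (wtLstep α) (x, r) q := by
          rw [pathSum_lukaStep_eq_sum _ hr hx]
          refine sum_congr rfl fun h hh => ?_
          exact congrArg _ (ih (mem_Icc.1 hh).1 (by push_cast at hq; omega))

/-- for any sequence of nonzero complex numbers `α` (with the
convention `α₋₁ = -1`), the Schröder path weight sum equals the Łukasiewicz path
weight sum. -/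
theorem schroeder_eq_luka (α : ℕ → ℂ) (hα0 : ∀ k, α k ≠ 0) (n r s : ℕ) :
    (∑ᶠ p ∈ {l : List (ℤ × ℤ) |
        IsLatticePath schStep (0, (r : ℤ)) l ((n : ℤ), (s : ℤ)) ∧
          l.head? ≠ some (0, -1)},
      pathWeight (wtSstep α) (0, (r : ℤ)) p) =
    ∑ᶠ q ∈ {l : List (ℤ × ℤ) |
        IsLatticePath lukaStep (0, (r : ℤ)) l ((n : ℤ), (s : ℤ))},
      pathWeight (wtLstep α) (0, (r : ℤ)) q :=
  schroederSum_eq_pathSum_lukaStep hα0 r.cast_nonneg (zero_add _).symm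

end
end
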